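/- (Theorem 1) Let W be a symmetric N×N real matrix with nonnegative entries, positive degrees d_j := Σ_i W_{ij}, D := diag(d_1,…,d_N), H := W·D⁻¹, and L̃ := D^{-1/2}(D−W)D^{-1/2}. Suppose L̃ has an orthonormal eigenbasis with eigenvalues 0 = μ_1 < μ_2 ≤ … ≤ μ_N < 2 (eigenvalue 0 simple), and set μ' := min{μ_2, 2−μ_N} > 0. Let L₊, L₋ be nonempty subsets of {1,…,N} with seeds p₊ := v_{L₊}, p₋ := v_{L₋}, and let γ > 0. If the positive integer K satisfies K ≥ (1/μ')·log[(2√(d_max)/γ)·(1/√(d_min₋|L₋|) + 1/√(d_min₊|L₊|))], then for every θ in the probability simplex S^K, the outputs y := Σ_{k=1}^K θ_k·H^k(p₊ − p₋) and y̌ := Σ_{k=1}^{K−1} θ_k·H^k(p₊ − p₋) + θ_K·H^{K+1}(p₊ − p₋) satisfy ‖y − y̌‖ ≤ γ; here d_max := max_i d_i, d_min₊ := min_{i∈L₊} d_i, d_min₋ := min_{i∈L₋} d_i. -/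

import Mathlib

open Matrix Finset

noncomputable def eNorm {N : ℕ} (x : Fin N → ℝ) : ℝ := Real.sqrt (∑ i, x i ^ 2)

/-!
Conjugation by `D^{1/2}` turns `1 - L̃` into `H`, so
`H^K - H^{K+1} = D^{1/2} (1 - L̃)^K L̃ D^{-1/2}`. The middle factor acts on the eigenvector
`q_i` by `(1 - μ_i)^K μ_i`, which vanishes for `i = 0` and is at most
`2 (1 - μ')^K ≤ 2 e^{-μ' K}` in absolute value otherwise. Hence
`‖y - y̌‖ ≤ θ_K √d_max · 2 (1 - μ')^K · ‖D^{-1/2} (p₊ - p₋)‖`, and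
`‖D^{-1/2} v_L‖ ≤ 1 / √(d_min |L|)` for a seed vector, so the lower bound on `K` makes the
right-hand side at most `γ`.
-/

section eNorm

variable {n : ℕ}

lemma eNorm_eq_norm_toLp (x : Fin n → ℝ) :
    eNorm x = ‖(WithLp.toLp 2 x : EuclideanSpace ℝ (Fin n))‖ := by
  simp [eNorm, EuclideanSpace.norm_eq]

lemma eNorm_eq_sqrt_dotProduct (x : Fin n → ℝ) : eNorm x = √(x ⬝ᵥ x) := by
  simp only [eNorm, dotProduct, sq]

lemma eNorm_smul (c : ℝ) (x : Fin n → ℝ) : eNorm (c • x) = |c| * eNorm x := by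
  simp only [eNorm_eq_norm_toLp, WithLp.toLp_smul, norm_smul, Real.norm_eq_abs]

lemma eNorm_sub_le (x y : Fin n → ℝ) : eNorm (x - y) ≤ eNorm x + eNorm y := by
  simpa only [eNorm_eq_norm_toLp, WithLp.toLp_sub] using norm_sub_le _ _

lemma eNorm_le_of_abs_le {x y : Fin n → ℝ} {c : ℝ} (hc : 0 ≤ c)
    (h : ∀ i, |x i| ≤ c * |y i|) : eNorm x ≤ c * eNorm y := by
  have hsq : ∑ i, x i ^ 2 ≤ (c * eNorm y) ^ 2 := by
    rw [mul_pow, eNorm, Real.sq_sqrt (by positivity), Finset.mul_sum]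
    refine Finset.sum_le_sum fun i _ => ?_
    simpa only [← sq_abs (x i), ← sq_abs (y i), mul_pow] using
      pow_le_pow_left₀ (abs_nonneg _) (h i) 2
  exact Real.sqrt_le_iff.mpr ⟨by unfold eNorm; positivity, hsq⟩

lemma eNorm_diagonal_mulVec_le {s : Fin n → ℝ} {c : ℝ} (hc : 0 ≤ c) (hs : ∀ j, |s j| ≤ c)
    (w : Fin n → ℝ) : eNorm (diagonal s *ᵥ w) ≤ c * eNorm w :=
  eNorm_le_of_abs_le hc fun j => by
    rw [mulVec_diagonal, abs_mul]
    exact mul_le_mul_of_nonneg_right (hs j) (abs_nonneg _)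

lemma eNorm_transpose_mulVec {Q : Matrix (Fin n) (Fin n) ℝ} (hQ : Q * Qᵀ = 1)
    (w : Fin n → ℝ) : eNorm (Qᵀ *ᵥ w) = eNorm w := by
  rw [eNorm_eq_sqrt_dotProduct, eNorm_eq_sqrt_dotProduct, dotProduct_mulVec,
    vecMul_transpose, mulVec_mulVec, hQ, one_mulVec, dotProduct_comm]

lemma mul_transpose_of_mulVec_eq_smul {A : Matrix (Fin n) (Fin n) ℝ}
    {q : Fin n → Fin n → ℝ} {μ : Fin n → ℝ} (heig : ∀ i, A *ᵥ q i = μ i • q i) :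
    A * (Matrix.of q)ᵀ = (Matrix.of q)ᵀ * diagonal μ := by
  ext j i
  rw [mul_diagonal]
  simpa [mul_apply, mulVec, dotProduct, mul_comm] using congrFun (heig i) j

lemma eNorm_mulVec_le_of_orthonormal_eigenvectors {A : Matrix (Fin n) (Fin n) ℝ}
    {q : Fin n → Fin n → ℝ} {μ : Fin n → ℝ}
    (horth : ∀ i j, q i ⬝ᵥ q j = if i = j then 1 else 0)
    (heig : ∀ i, A *ᵥ q i = μ i • q i) {c : ℝ} (hc0 : 0 ≤ c) (hc : ∀ i, |μ i| ≤ c)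
    (v : Fin n → ℝ) : eNorm (A *ᵥ v) ≤ c * eNorm v := by
  set Q := Matrix.of q
  have hQQ : Q * Qᵀ = 1 := by
    ext i j
    simpa [mul_apply, one_apply, dotProduct, Q] using horth i j
  have hv : v = Qᵀ *ᵥ (Q *ᵥ v) := by
    rw [mulVec_mulVec, mul_eq_one_comm.mp hQQ, one_mulVec]
  calc eNorm (A *ᵥ v) = eNorm (diagonal μ *ᵥ (Q *ᵥ v)) := by
        rw [hv, mulVec_mulVec, mul_transpose_of_mulVec_eq_smul heig, ← mulVec_mulVec,
          eNorm_transpose_mulVec hQQ, ← hv]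
    _ ≤ c * eNorm (Q *ᵥ v) := eNorm_diagonal_mulVec_le hc0 hc _
    _ = c * eNorm v := by rw [← eNorm_transpose_mulVec hQQ, ← hv]

end eNorm

lemma semiconjBy_sqrt_diagonal {ι : Type*} [Fintype ι] [DecidableEq ι] (W : Matrix ι ι ℝ)
    {d : ι → ℝ} (hd : ∀ j, 0 < d j) :
    SemiconjBy (diagonal fun j => √(d j))
      (1 - diagonal (fun j => (√(d j))⁻¹) * (diagonal d - W) * diagonal (fun j => (√(d j))⁻¹))
      (W * diagonal fun j => (d j)⁻¹) := by
  unfold SemiconjBy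
  ext i j
  have hsq : √(d j) ^ 2 = d j := Real.sq_sqrt (hd j).le
  have hdj : d j ≠ 0 := (hd j).ne'
  have hj : √(d j) ≠ 0 := (Real.sqrt_pos.mpr (hd j)).ne'
  have hi : √(d i) ≠ 0 := (Real.sqrt_pos.mpr (hd i)).ne'
  simp only [Matrix.mul_sub, Matrix.sub_apply, diagonal_mul, mul_diagonal, diagonal_apply,
    one_apply]
  split_ifs with h
  · subst h
    field_simp
    rw [hsq]
    ring
  · field_simp
    rw [hsq]
    ring

lemma pow_sub_pow_succ_mul_of_semiconjBy {R : Type*} [Ring R] {s m h : R}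
    (hc : SemiconjBy s m h) (k : ℕ) : (h ^ k - h ^ (k + 1)) * s = s * (m ^ k * (1 - m)) := by
  rw [sub_mul, ← (hc.pow_right k).eq, ← (hc.pow_right (k + 1)).eq, pow_succ]
  noncomm_ring

lemma one_sub_pow_mul_mulVec_eq_smul {n : Type*} [Fintype n] [DecidableEq n] {L : Matrix n n ℝ}
    {v : n → ℝ} {μ : ℝ} (h : L *ᵥ v = μ • v) (k : ℕ) :
    ((1 - L) ^ k * L) *ᵥ v = ((1 - μ) ^ k * μ) • v := by
  have h1 : (1 - L) *ᵥ v = (1 - μ) • v := by rw [sub_mulVec, one_mulVec, h, sub_smul, one_smul]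
  rw [← mulVec_mulVec, h, mulVec_smul, mul_comm, ← smul_smul]
  congr 1
  induction k with
  | zero => simp
  | succ k ih => rw [pow_succ, ← mulVec_mulVec, h1, mulVec_smul, ih, smul_smul, ← pow_succ']

lemma eNorm_pow_sub_pow_succ_mulVec_le {n : ℕ} {H L S : Matrix (Fin n) (Fin n) ℝ}
    (hc : SemiconjBy S (1 - L) H) {a b : ℝ} (ha : 0 ≤ a) (k : ℕ)
    (hS : ∀ w, eNorm (S *ᵥ w) ≤ a * eNorm w)
    (hL : ∀ w, eNorm (((1 - L) ^ k * L) *ᵥ w) ≤ b * eNorm w) (u : Fin n → ℝ) :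
    eNorm (H ^ k *ᵥ (S *ᵥ u) - H ^ (k + 1) *ᵥ (S *ᵥ u)) ≤ a * b * eNorm u := by
  rw [← sub_mulVec, mulVec_mulVec, pow_sub_pow_succ_mul_of_semiconjBy hc, sub_sub_cancel,
    ← mulVec_mulVec, mul_assoc]
  exact (hS _).trans (mul_le_mul_of_nonneg_left (hL u) ha)

lemma eNorm_walk_pow_sub_pow_succ_mulVec_le {n : ℕ} (W : Matrix (Fin n) (Fin n) ℝ)
    {d : Fin n → ℝ} (hd : ∀ j, 0 < d j) {dmax : ℝ} (hdmax : ∀ j, d j ≤ dmax)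
    {q : Fin n → Fin n → ℝ} {μ : Fin n → ℝ}
    (horth : ∀ i j, q i ⬝ᵥ q j = if i = j then 1 else 0)
    (heig : ∀ i, (diagonal (fun j => (√(d j))⁻¹) * (diagonal d - W) *
      diagonal (fun j => (√(d j))⁻¹)) *ᵥ q i = μ i • q i)
    {K : ℕ} {c : ℝ} (hc0 : 0 ≤ c) (hc : ∀ i, |(1 - μ i) ^ K * μ i| ≤ c) (x : Fin n → ℝ) :
    eNorm ((W * diagonal fun j => (d j)⁻¹) ^ K *ᵥ x -
        (W * diagonal fun j => (d j)⁻¹) ^ (K + 1) *ᵥ x) ≤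
      √dmax * c * eNorm (diagonal (fun j => (√(d j))⁻¹) *ᵥ x) := by
  set u := diagonal (fun j => (√(d j))⁻¹) *ᵥ x
  have hx : x = diagonal (fun j => √(d j)) *ᵥ u := by
    ext j
    simp [u, mulVec_diagonal, (Real.sqrt_pos.mpr (hd j)).ne']
  rw [hx]
  refine eNorm_pow_sub_pow_succ_mulVec_le (semiconjBy_sqrt_diagonal W hd) (Real.sqrt_nonneg _) K
    (eNorm_diagonal_mulVec_le (Real.sqrt_nonneg _) fun j => ?_)
    (eNorm_mulVec_le_of_orthonormal_eigenvectors horth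
      (fun i => one_sub_pow_mul_mulVec_eq_smul (heig i) K) hc0 hc) u
  rw [abs_of_nonneg (Real.sqrt_nonneg _)]
  exact Real.sqrt_le_sqrt (hdmax j)

lemma eNorm_inv_sqrt_diagonal_mulVec_seed_le {n : ℕ} {d : Fin n → ℝ} (hd : ∀ j, 0 < d j)
    {L : Finset (Fin n)} (hL : L.Nonempty) {p : Fin n → ℝ}
    (hp : ∀ i, p i = if i ∈ L then ((#L : ℝ))⁻¹ else 0) :
    eNorm (diagonal (fun j => (√(d j))⁻¹) *ᵥ p) ≤ 1 / √(L.inf' hL d * #L) := by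
  have hm : 0 < L.inf' hL d := by
    obtain ⟨i, -, hi⟩ := L.exists_mem_eq_inf' hL d
    exact hi ▸ hd i
  have hcard : (0 : ℝ) < #L := by exact_mod_cast hL.card_pos
  have hpnorm : eNorm p = (√(#L : ℝ))⁻¹ := by
    rw [eNorm, ← Real.sqrt_inv]
    congr 1
    simp only [hp, ite_pow, zero_pow two_ne_zero, Finset.sum_ite_mem, Finset.univ_inter,
      Finset.sum_const, nsmul_eq_mul]
    field_simp
  have hpt : ∀ j, |(√(d j))⁻¹ * p j| ≤ (√(L.inf' hL d))⁻¹ * |p j| := by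
    intro j
    rw [abs_mul, abs_of_pos (inv_pos.mpr (Real.sqrt_pos.mpr (hd j)))]
    by_cases hj : j ∈ L
    · gcongr
      exact L.inf'_le d hj
    · simp [hp, hj]
  calc eNorm (diagonal (fun j => (√(d j))⁻¹) *ᵥ p)
      ≤ (√(L.inf' hL d))⁻¹ * eNorm p :=
        eNorm_le_of_abs_le (by positivity) fun j => by rw [mulVec_diagonal]; exact hpt j
    _ = 1 / √(L.inf' hL d * #L) := by
        rw [hpnorm, Real.sqrt_mul hm.le, one_div, mul_inv]

lemma abs_one_sub_pow_mul_le {n : ℕ} {μ : Fin (n + 2) → ℝ} (hmono : Monotone μ)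
    (hμ0 : μ 0 = 0) {m : ℝ} (hm : 0 ≤ m) (hm1 : m ≤ μ 1) (hm2 : m ≤ 2 - μ (Fin.last (n + 1)))
    (K : ℕ) (i : Fin (n + 2)) : |(1 - μ i) ^ K * μ i| ≤ 2 * (1 - m) ^ K := by
  have hlast : μ i ≤ μ (Fin.last (n + 1)) := hmono (Fin.le_last i)
  rcases eq_or_ne i 0 with rfl | hi
  · have : m ≤ 1 := by linarith [hmono (Fin.le_last 1)]
    simp only [hμ0, mul_zero, abs_zero]
    positivity
  · have hmi : m ≤ μ i := hm1.trans (hmono (Fin.one_le_of_ne_zero hi))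
    rw [abs_mul, abs_pow, mul_comm]
    gcongr
    · exact abs_le.mpr ⟨by linarith, by linarith⟩
    · exact abs_le.mpr ⟨by linarith, by linarith⟩

lemma mul_one_sub_pow_le_one_of_log_le {μ B : ℝ} {K : ℕ} (hμ : 0 < μ) (hμ1 : μ ≤ 1)
    (hK : 1 / μ * Real.log B ≤ K) : B * (1 - μ) ^ K ≤ 1 := by
  rcases le_or_gt B 0 with hB | hB
  · have : 0 ≤ (1 - μ) ^ K := pow_nonneg (by linarith) K
    nlinarith
  have hlog : Real.log B ≤ μ * K := by
    rwa [one_div_mul_eq_div, div_le_iff₀ hμ, mul_comm] at hK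
  calc B * (1 - μ) ^ K ≤ B * Real.exp (-μ) ^ K := by
        gcongr
        linarith [Real.add_one_le_exp (-μ)]
    _ = B * Real.exp (-(μ * K)) := by rw [← Real.exp_nat_mul]; ring_nf
    _ ≤ B * Real.exp (-Real.log B) := by gcongr
    _ = 1 := by rw [Real.exp_neg, Real.exp_log hB, mul_inv_cancel₀ hB.ne']

lemma abs_le_one_of_sum_eq_one {ι : Type*} {s : Finset ι} {θ : ι → ℝ}
    (hθnn : ∀ k ∈ s, 0 ≤ θ k) (hθsum : ∑ k ∈ s, θ k = 1) {k : ι} (hk : k ∈ s) : |θ k| ≤ 1 := by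
  rw [abs_of_nonneg (hθnn k hk), ← hθsum]
  exact Finset.single_le_sum hθnn hk

lemma sum_Icc_smul_sub_replace_top {R V : Type*} [Ring R] [AddCommGroup V] [Module R V]
    (θ : ℕ → R) (f : ℕ → V) {K : ℕ} (hK : 1 ≤ K) :
    ∑ k ∈ Icc 1 K, θ k • f k - (∑ k ∈ Icc 1 (K - 1), θ k • f k + θ K • f (K + 1)) =
      θ K • (f K - f (K + 1)) := by
  obtain ⟨K, rfl⟩ := Nat.exists_eq_add_of_le' hK
  rw [Nat.add_sub_cancel, Finset.sum_Icc_succ_top (by omega), smul_sub]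
  abel

theorem gamma_distinguishability_threshold_bound_general
    (N : ℕ) (W : Matrix (Fin (N + 2)) (Fin (N + 2)) ℝ)
    (d : Fin (N + 2) → ℝ)
    (hdpos : ∀ j, 0 < d j)
    (H : Matrix (Fin (N + 2)) (Fin (N + 2)) ℝ)
    (hH : H = W * Matrix.diagonal (fun j => (d j)⁻¹))
    (Ltil : Matrix (Fin (N + 2)) (Fin (N + 2)) ℝ)
    (hLtil : Ltil = Matrix.diagonal (fun j => (Real.sqrt (d j))⁻¹) *
      (Matrix.diagonal d - W) * Matrix.diagonal (fun j => (Real.sqrt (d j))⁻¹))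
    (q : Fin (N + 2) → (Fin (N + 2) → ℝ)) (μ : Fin (N + 2) → ℝ)
    (horth : ∀ i j, q i ⬝ᵥ q j = if i = j then 1 else 0)
    (heig : ∀ i, Ltil.mulVec (q i) = μ i • q i)
    (hmono : Monotone μ) (hμ0 : μ 0 = 0) (hsimple : ∀ i, i ≠ 0 → 0 < μ i)
    (hμlt2 : ∀ i, μ i < 2)
    (μ' : ℝ) (hμ' : μ' = min (μ 1) (2 - μ (Fin.last (N + 1))))
    (dmax : ℝ) (hdmax : dmax = Finset.univ.sup' Finset.univ_nonempty d)
    (Lp Lm : Finset (Fin (N + 2))) (hLp : Lp.Nonempty) (hLm : Lm.Nonempty)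
    (pp pm : Fin (N + 2) → ℝ)
    (hpp : ∀ i, pp i = if i ∈ Lp then ((Lp.card : ℝ))⁻¹ else 0)
    (hpm : ∀ i, pm i = if i ∈ Lm then ((Lm.card : ℝ))⁻¹ else 0)
    (dminp dminm : ℝ) (hdminp : dminp = Lp.inf' hLp d) (hdminm : dminm = Lm.inf' hLm d)
    (γ : ℝ) (hγ : 0 < γ)
    (K : ℕ) (hK : 1 ≤ K)
    (hKbound : (K : ℝ) ≥ (1 / μ') *
      Real.log ((2 * Real.sqrt dmax / γ) *
        (1 / Real.sqrt (dminm * (Lm.card : ℝ)) + 1 / Real.sqrt (dminp * (Lp.card : ℝ)))))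
    (θ : ℕ → ℝ) (hθnn : ∀ k ∈ Finset.Icc 1 K, 0 ≤ θ k)
    (hθsum : ∑ k ∈ Finset.Icc 1 K, θ k = 1) :
    eNorm ((∑ k ∈ Finset.Icc 1 K, θ k • (H ^ k).mulVec (pp - pm)) -
      ((∑ k ∈ Finset.Icc 1 (K - 1), θ k • (H ^ k).mulVec (pp - pm)) +
        θ K • (H ^ (K + 1)).mulVec (pp - pm))) ≤ γ := by
  have hμ'pos : 0 < μ' :=
    hμ' ▸ lt_min (hsimple 1 one_ne_zero) (by linarith [hμlt2 (Fin.last (N + 1))])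
  have hμ'1 : μ' ≤ μ 1 := hμ' ▸ min_le_left _ _
  have hμ'2 : μ' ≤ 2 - μ (Fin.last (N + 1)) := hμ' ▸ min_le_right _ _
  have hμ'le : μ' ≤ 1 := by linarith [hmono (Fin.le_last (1 : Fin (N + 2)))]
  subst hH hLtil
  have hwalk := eNorm_walk_pow_sub_pow_succ_mulVec_le W hdpos
    (fun j => hdmax ▸ le_sup' d (mem_univ j)) horth heig
    (mul_nonneg zero_le_two (pow_nonneg (sub_nonneg.mpr hμ'le) K))
    (abs_one_sub_pow_mul_le hmono hμ0 hμ'pos.le hμ'1 hμ'2 K) (pp - pm)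
  set C := 1 / √(dminm * Lm.card) + 1 / √(dminp * Lp.card) with hC
  have hseeds : eNorm (diagonal (fun j => (√(d j))⁻¹) *ᵥ (pp - pm)) ≤ C := by
    rw [hC, mulVec_sub, hdminp, hdminm, add_comm (1 / _)]
    exact (eNorm_sub_le _ _).trans
      (add_le_add (eNorm_inv_sqrt_diagonal_mulVec_seed_le hdpos hLp hpp)
        (eNorm_inv_sqrt_diagonal_mulVec_seed_le hdpos hLm hpm))
  have hθK : |θ K| ≤ 1 := abs_le_one_of_sum_eq_one hθnn hθsum (Finset.mem_Icc.mpr ⟨hK, le_rfl⟩)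
  have hB := mul_one_sub_pow_le_one_of_log_le hμ'pos hμ'le hKbound
  rw [sum_Icc_smul_sub_replace_top θ _ hK, eNorm_smul]
  calc _ ≤ 1 * (√dmax * (2 * (1 - μ') ^ K) * C) := by
        gcongr
        · exact Real.sqrt_nonneg _
        · exact hwalk.trans (by gcongr)
    _ = γ * (2 * √dmax / γ * C * (1 - μ') ^ K) := by
        rw [div_mul_eq_mul_div, div_mul_eq_mul_div, mul_div_cancel₀ _ hγ.ne']
        ring
    _ ≤ γ := mul_le_of_le_one_right hγ.le hB

/-- Theorem 1: if
K ≥ (1/μ')·log[(2√(d_max)/γ)·(1/√(d_min₋|L₋|) + 1/√(d_min₊|L₊|))],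
then for every θ in the probability simplex (over indices 1,…,K), the outputs
y = Σ_{k=1}^K θ_k H^k(p₊−p₋) and
y̌ = Σ_{k=1}^{K−1} θ_k H^k(p₊−p₋) + θ_K H^{K+1}(p₊−p₋)
satisfy ‖y − y̌‖ ≤ γ.  (N ≥ 2 is encoded by using matrices of size N+2.) -/
theorem gamma_distinguishability_threshold_bound
    (N : ℕ) (W : Matrix (Fin (N + 2)) (Fin (N + 2)) ℝ)
    (hsym : W.IsSymm) (hnn : ∀ i j, 0 ≤ W i j)
    (d : Fin (N + 2) → ℝ) (hd : ∀ j, d j = ∑ i, W i j)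
    (hdpos : ∀ j, 0 < d j)
    (H : Matrix (Fin (N + 2)) (Fin (N + 2)) ℝ)
    (hH : H = W * Matrix.diagonal (fun j => (d j)⁻¹))
    (Ltil : Matrix (Fin (N + 2)) (Fin (N + 2)) ℝ)
    (hLtil : Ltil = Matrix.diagonal (fun j => (Real.sqrt (d j))⁻¹) *
      (Matrix.diagonal d - W) * Matrix.diagonal (fun j => (Real.sqrt (d j))⁻¹))
    (q : Fin (N + 2) → (Fin (N + 2) → ℝ)) (μ : Fin (N + 2) → ℝ)
    (horth : ∀ i j, q i ⬝ᵥ q j = if i = j then 1 else 0)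
    (heig : ∀ i, Ltil.mulVec (q i) = μ i • q i)
    (hmono : Monotone μ) (hμ0 : μ 0 = 0) (hsimple : ∀ i, i ≠ 0 → 0 < μ i)
    (hμlt2 : ∀ i, μ i < 2)
    (μ' : ℝ) (hμ' : μ' = min (μ 1) (2 - μ (Fin.last (N + 1))))
    (dmax : ℝ) (hdmax : dmax = Finset.univ.sup' Finset.univ_nonempty d)
    (Lp Lm : Finset (Fin (N + 2))) (hLp : Lp.Nonempty) (hLm : Lm.Nonempty)
    (pp pm : Fin (N + 2) → ℝ)
    (hpp : ∀ i, pp i = if i ∈ Lp then ((Lp.card : ℝ))⁻¹ else 0)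
    (hpm : ∀ i, pm i = if i ∈ Lm then ((Lm.card : ℝ))⁻¹ else 0)
    (dminp dminm : ℝ) (hdminp : dminp = Lp.inf' hLp d) (hdminm : dminm = Lm.inf' hLm d)
    (γ : ℝ) (hγ : 0 < γ)
    (K : ℕ) (hK : 1 ≤ K)
    (hKbound : (K : ℝ) ≥ (1 / μ') *
      Real.log ((2 * Real.sqrt dmax / γ) *
        (1 / Real.sqrt (dminm * (Lm.card : ℝ)) + 1 / Real.sqrt (dminp * (Lp.card : ℝ)))))
    (θ : ℕ → ℝ) (hθnn : ∀ k ∈ Finset.Icc 1 K, 0 ≤ θ k)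
    (hθsum : ∑ k ∈ Finset.Icc 1 K, θ k = 1) :
    eNorm ((∑ k ∈ Finset.Icc 1 K, θ k • (H ^ k).mulVec (pp - pm)) -
      ((∑ k ∈ Finset.Icc 1 (K - 1), θ k • (H ^ k).mulVec (pp - pm)) +
        θ K • (H ^ (K + 1)).mulVec (pp - pm))) ≤ γ :=
  gamma_distinguishability_threshold_bound_general N W d hdpos H hH Ltil hLtil q μ horth heig hmono
    hμ0 hsimple hμlt2 μ' hμ' dmax hdmax Lp Lm hLp hLm pp pm hpp hpm dminp dminm hdminp hdminm γ hγ K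
    hK hKbound θ hθnn hθsum
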